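/- For l ∈ {1,2}: (i) for z = it with real t satisfying 0 ≤ t ≤ 1, one has |α(2)K_{l,l}(2, z)|/2 + |α(4)K_{l,l}(4, z)|/4 ≤ 2/3 if 2 ∤ D, and ≤ 1/3 if 2 | D; (ii) for every prime p ≥ 3 and every z with Re z ≥ 0, one has |α(p)K_{l,l}(p, z)|/p + |α(p²)K_{l,l}(p², z)|/p² ≤ 5/9 if p ∤ D, and ≤ 1/5 if p | D. -/

import Mathlib

noncomputable section

open Complex Finset MeasureTheory

namespace EpsteinPaper

/-- `d` is a fundamental discriminant. -/
def IsFundDisc (d : ℤ) : Prop :=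
  (d % 4 = 1 ∧ Squarefree d) ∨
  (d % 4 = 0 ∧ Squarefree (d / 4) ∧ (d / 4 % 4 = 2 ∨ d / 4 % 4 = 3))

/-- Generalized binomial coefficient `z choose k`. -/
def gchoose (z : ℂ) (k : ℕ) : ℂ := (∏ i ∈ Finset.range k, (z - (i : ℂ))) / (k.factorial : ℂ)

/-- `τ_k(m)`: the number of ordered `k`-tuples of positive integers with product `m`. -/
def tauk (k m : ℕ) : ℕ := Nat.card {f : Fin k → ℕ // ∏ i, f i = m}

/-- `τ(m)`: the number of divisors of `m`. -/
def tau (m : ℕ) : ℕ := m.divisors.card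

/-- `(m, d^∞)`: the largest divisor of `m` supported on primes dividing `d`. -/
def corad (m d : ℕ) : ℕ :=
  ∏ p ∈ m.primeFactors.filter (fun p => p ∣ d), p ^ (m.factorization p)

/-- `G_N = ∏_{p | N} (1 + p^{-3/4})²`. -/
def GNfac (N : ℕ) : ℝ := ∏ p ∈ N.primeFactors, (1 + (p : ℝ) ^ (-(3 / 4 : ℝ))) ^ 2

/-- The data of the paper: two moduli together with Dirichlet characters on them. -/
structure Ctx where
  d₁ : ℕ
  d₂ : ℕ
  χ₁ : DirichletCharacter ℂ d₁
  χ₂ : DirichletCharacter ℂ d₂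

namespace Ctx

/-- `D = d₁ d₂`. -/
def D (P : Ctx) : ℕ := P.d₁ * P.d₂

/-- Swapping the roles of the two characters. -/
def swap (P : Ctx) : Ctx := ⟨P.d₂, P.d₁, P.χ₂, P.χ₁⟩

/-- The standing hypotheses: `d₁, d₂` are positive and coprime, `-D` is a fundamental
discriminant, and `χ₁, χ₂` are real primitive Dirichlet characters. -/
def Good (P : Ctx) : Prop :=
  0 < P.d₁ ∧ 0 < P.d₂ ∧ Nat.Coprime P.d₁ P.d₂ ∧
  IsFundDisc (-(P.D : ℤ)) ∧
  P.χ₁.IsPrimitive ∧ P.χ₂.IsPrimitive ∧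
  (∀ a : ZMod P.d₁, star (P.χ₁ a) = P.χ₁ a) ∧
  (∀ a : ZMod P.d₂, star (P.χ₂ a) = P.χ₂ a)

/-- `χ_D(n) = χ_{d₁}(n) χ_{d₂}(n)` as a function on `ℕ`. -/
def chiD (P : Ctx) (n : ℕ) : ℂ := P.χ₁ (n : ZMod P.d₁) * P.χ₂ (n : ZMod P.d₂)

/-- `χ_D` as a Dirichlet character modulo `D = d₁ d₂`. -/
def chiDchar (P : Ctx) : DirichletCharacter ℂ (P.d₁ * P.d₂) :=
  (DirichletCharacter.changeLevel (dvd_mul_right P.d₁ P.d₂) P.χ₁) *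
  (DirichletCharacter.changeLevel (dvd_mul_left P.d₂ P.d₁) P.χ₂)

/-- `r(n) = Σ_{ab=n} χ_{d₁}(a) χ_{d₂}(b)`. -/
def r (P : Ctx) (n : ℕ) : ℂ :=
  ∑ p ∈ n.divisorsAntidiagonal, P.χ₁ (p.1 : ZMod P.d₁) * P.χ₂ (p.2 : ZMod P.d₂)

/-- `α` is the multiplicative function whose generating series at each prime `p` is
`((1 - χ_{d₁}(p) x) (1 - χ_{d₂}(p) x))^{1/2}` (principal binomial series); equivalently
`Σ α(ν) ν^{-s} = (L(s,χ_{d₁}) L(s,χ_{d₂}))^{-1/2}` for `Re s > 1`. -/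
def IsAlpha (P : Ctx) (α : ℕ → ℂ) : Prop :=
  α 1 = 1 ∧
  (∀ m n : ℕ, Nat.Coprime m n → α (m * n) = α m * α n) ∧
  (∀ p : ℕ, p.Prime → ∀ k : ℕ, α (p ^ k) =
    ∑ ij ∈ Finset.HasAntidiagonal.antidiagonal k,
      gchoose (1 / 2) ij.1 * (-(P.χ₁ (p : ZMod P.d₁))) ^ ij.1 *
        (gchoose (1 / 2) ij.2 * (-(P.χ₂ (p : ZMod P.d₂))) ^ ij.2))

end Ctx

/-- The smoothing weight `𝓛(ν)`. -/
def LL (X : ℝ) (ν : ℕ) : ℝ :=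
  if (ν : ℝ) < Real.sqrt X then 1
  else if (ν : ℝ) ≤ X then 2 * Real.log (X / (ν : ℝ)) / Real.log X
  else 0

/-- `β(ν) = α(ν) 𝓛(ν)`. -/
def betaf (α : ℕ → ℂ) (X : ℝ) (ν : ℕ) : ℂ := α ν * ((LL X ν : ℝ) : ℂ)

/-- The mollifier `η(s) = Σ_{ν ≤ X} β(ν) ν^{-s}`. -/
def eta (α : ℕ → ℂ) (X : ℝ) (s : ℂ) : ℂ :=
  ∑ ν ∈ Finset.Icc 1 ⌊X⌋₊, betaf α X ν * (ν : ℂ) ^ (-s)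

namespace Ctx

/-- `L(s) = L(s, χ_{d₁}) L(s, χ_{d₂})`. -/
def Lfun (P : Ctx) [NeZero P.d₁] [NeZero P.d₂] (s : ℂ) : ℂ :=
  P.χ₁.LFunction s * P.χ₂.LFunction s

/-- `F(t) = (2π/√D)^{-(1/2+it)} Γ(1/2+it) L(1/2+it) |η(1/2+it)|² e^{(π/2 - 1/T) t}`. -/
def Ffun (P : Ctx) [NeZero P.d₁] [NeZero P.d₂] (α : ℕ → ℂ) (T X : ℝ) (t : ℝ) : ℂ :=
  (((2 * Real.pi / Real.sqrt (P.D : ℝ) : ℝ)) : ℂ) ^ (-(1 / 2 + Complex.I * (t : ℂ))) *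
  Complex.Gamma (1 / 2 + Complex.I * (t : ℂ)) *
  P.Lfun (1 / 2 + Complex.I * (t : ℂ)) *
  (((‖eta α X (1 / 2 + Complex.I * (t : ℂ))‖) ^ 2 : ℝ) : ℂ) *
  ((Real.exp ((Real.pi / 2 - 1 / T) * t) : ℝ) : ℂ)

/-- `I(t, H) = ∫_t^{t+H} F(u) du`. -/
def Ifun (P : Ctx) [NeZero P.d₁] [NeZero P.d₂] (α : ℕ → ℂ) (T X t H : ℝ) : ℂ :=
  ∫ u in t..(t + H), P.Ffun α T X u

/-- The function `G(y)` (with `δ = 1/T`). -/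
def Gfun (P : Ctx) (α : ℕ → ℂ) (T X : ℝ) (y : ℝ) : ℝ :=
  (‖∑ ν₁ ∈ Finset.Icc 1 ⌊X⌋₊, ∑ ν₂ ∈ Finset.Icc 1 ⌊X⌋₊,
    betaf α X ν₁ * betaf α X ν₂ / (ν₂ : ℂ) *
    ∑' n : ℕ, P.r n *
      Complex.exp (-(((2 * Real.pi * (n : ℝ) * (ν₁ : ℝ) /
          (Real.sqrt (P.D : ℝ) * (ν₂ : ℝ)) * y : ℝ)) : ℂ) *
        (((Real.sin (1 / T) : ℝ) : ℂ) + Complex.I * ((Real.cos (1 / T) : ℝ) : ℂ)))‖) ^ 2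

/-- `J(x, θ) = ∫_x^∞ G(u) u^{-θ} du`. -/
def Jfun (P : Ctx) (α : ℕ → ℂ) (T X θ x : ℝ) : ℝ :=
  ∫ u in Set.Ioi x, P.Gfun α T X u * u ^ (-θ)

/-- The Euler-factor function `K(m, s)`. -/
def Kf (P : Ctx) (m : ℕ) (s : ℂ) : ℂ :=
  ∏ p ∈ m.primeFactors,
    ((∑' k : ℕ, (P.r (p ^ k)) ^ 2 * (p : ℂ) ^ (-(k : ℂ) * s))⁻¹ *
     (∑' k : ℕ, P.r (p ^ (m.factorization p + k)) * P.r (p ^ k) * (p : ℂ) ^ (-(k : ℂ) * s)))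

/-- `K_{l,l}(m, z)` in its "sum" form (an entire function of `z`); the case `l = 1`.  The case
`l = 2` is obtained by applying this to `P.swap`. -/
def KllS (P : Ctx) (m : ℕ) (z : ℂ) : ℂ :=
  ((corad m P.d₁ : ℕ) : ℂ) ^ (-z) *
  P.χ₁ ((corad m P.d₂ : ℕ) : ZMod P.d₁) * P.χ₂ ((corad m P.d₁ : ℕ) : ZMod P.d₂) *
  ∏ p ∈ m.primeFactors.filter (fun p => ¬ p ∣ P.D),
    (1 + P.chiD p / (p : ℂ))⁻¹ * (P.χ₁ (p : ZMod P.d₁)) ^ (m.factorization p) *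
    ((∑ j ∈ Finset.range (m.factorization p + 1), P.chiD (p ^ j) * (p : ℂ) ^ (-(j : ℂ) * z)) -
      (p : ℂ) ^ (-(z + 1)) *
        ∑ j ∈ Finset.range (m.factorization p - 1), P.chiD (p ^ j) * (p : ℂ) ^ (-(j : ℂ) * z))

/-- `K_{l,l}(m, z)` in its original "product" form; the case `l = 1`. -/
def KllP (P : Ctx) (m : ℕ) (z : ℂ) : ℂ :=
  ((corad m P.d₁ : ℕ) : ℂ) ^ (-z) *
  P.χ₁ ((corad m P.d₂ : ℕ) : ZMod P.d₁) * P.χ₂ ((corad m P.d₁ : ℕ) : ZMod P.d₂) *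
  ∏ p ∈ m.primeFactors.filter (fun p => ¬ p ∣ P.D),
    (1 - (p : ℂ) ^ (-(2 : ℂ)))⁻¹ * (1 - P.chiD p * (p : ℂ) ^ (-z))⁻¹ * (1 - P.chiD p / (p : ℂ)) *
    (P.χ₁ (p : ZMod P.d₁)) ^ (m.factorization p) *
    (1 - (p : ℂ) ^ (-(z + 1)) +
      P.chiD (p ^ (m.factorization p + 1)) *
        (p : ℂ) ^ (-((m.factorization p : ℂ) * z + 1)) * (1 - (p : ℂ) ^ (-(z - 1))))

/-- `K_{l,l}` for `l ∈ {1, 2}` (sum form). -/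
def Kl (P : Ctx) (l : Fin 2) : ℕ → ℂ → ℂ :=
  if l = 0 then P.KllS else P.swap.KllS

/-- `K_{1,2}(m₁, m₂, z)`. -/
def K12 (P : Ctx) (m₁ m₂ : ℕ) (z : ℂ) : ℂ :=
  P.χ₁ (m₁ : ZMod P.d₁) * P.χ₂ (m₂ : ZMod P.d₂) *
  (∑ q ∈ (corad (m₁ * m₂ / P.D) P.D).divisors, (q : ℂ) ^ (-z)) *
  ∏ p ∈ (m₁ * m₂).primeFactors.filter (fun p => ¬ p ∣ P.D),
    (1 + P.chiD p / (p : ℂ))⁻¹ *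
    ((∑ j ∈ Finset.range ((m₁ * m₂).factorization p + 1), (p : ℂ) ^ (-(j : ℂ) * z)) -
      P.chiD p * (p : ℂ) ^ (-(z + 1)) *
        ∑ j ∈ Finset.range ((m₁ * m₂).factorization p - 1), (p : ℂ) ^ (-(j : ℂ) * z))

end Ctx

/-- The Gauss sum `G(χ) = Σ_{x mod d} χ(x) e^{2πi x/d}`. -/
def gaussS (d : ℕ) (χ : DirichletCharacter ℂ d) : ℂ :=
  ∑ x ∈ Finset.range d, χ (x : ZMod d) * Complex.exp (2 * (Real.pi : ℂ) * Complex.I * (x : ℂ) / (d : ℂ))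

/-- `χ(x / y)`, with the convention that this is `0` when `y ∤ x`. -/
def chiAt (d : ℕ) (χ : DirichletCharacter ℂ d) (x y : ℕ) : ℂ :=
  if y ∣ x then χ ((x / y : ℕ) : ZMod d) else 0

namespace Ctx

/-- The exponential sum `ε_q(l)`. -/
def epsq (P : Ctx) (m₁ m₂ l q : ℕ) : ℂ :=
  ∑ a ∈ (Finset.range q).filter (fun a => Nat.Coprime a q),
    Complex.exp (-(2 * (Real.pi : ℂ) * Complex.I * (a : ℂ) * (l : ℂ)) / (q : ℂ)) *
    (gaussS P.d₁ P.χ₁ / ((Real.sqrt (P.d₁ : ℝ) : ℝ) : ℂ) *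
        P.χ₁ ((a * (m₁ / Nat.gcd m₁ q) : ℕ) : ZMod P.d₁) *
        chiAt P.d₂ P.χ₂ (q / Nat.gcd q m₁) P.d₁ +
      gaussS P.d₂ P.χ₂ / ((Real.sqrt (P.d₂ : ℝ) : ℝ) : ℂ) *
        P.χ₂ ((a * (m₁ / Nat.gcd m₁ q) : ℕ) : ZMod P.d₂) *
        chiAt P.d₁ P.χ₁ (q / Nat.gcd q m₁) P.d₂) *
    ((starRingEnd ℂ) (gaussS P.d₁ P.χ₁) / ((Real.sqrt (P.d₁ : ℝ) : ℝ) : ℂ) *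
        P.χ₁ ((a * (m₂ / Nat.gcd m₂ q) : ℕ) : ZMod P.d₁) *
        chiAt P.d₂ P.χ₂ (q / Nat.gcd q m₂) P.d₁ +
      (starRingEnd ℂ) (gaussS P.d₂ P.χ₂) / ((Real.sqrt (P.d₂ : ℝ) : ℝ) : ℂ) *
        P.χ₂ ((a * (m₂ / Nat.gcd m₂ q) : ℕ) : ZMod P.d₂) *
        chiAt P.d₁ P.χ₁ (q / Nat.gcd q m₂) P.d₂)

/-- The `q`-th term of the singular series `σ(l, m₁, m₂)`. -/
def sigTerm (P : Ctx) (m₁ m₂ l q : ℕ) : ℂ :=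
  P.epsq m₁ m₂ l q * ((Nat.gcd q (m₁ * m₂) : ℕ) : ℂ) /
    ((q : ℂ) ^ 2 *
      ((Real.sqrt (((P.D / Nat.gcd (q / Nat.gcd q m₁) P.D) *
          (P.D / Nat.gcd (q / Nat.gcd q m₂) P.D) : ℕ) : ℝ) : ℝ) : ℂ))

/-- The singular series `σ(l, m₁, m₂) = Σ_{q ≥ 1} ε_q(l) (q, m₁m₂) / (q² √(r₁ r₂))`. -/
def sigmaS (P : Ctx) (m₁ m₂ l : ℕ) : ℂ :=
  ∑' q : ℕ, if q = 0 then 0 else P.sigTerm m₁ m₂ l q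

/-- The shifted-convolution Dirichlet series `D_{m₁,m₂}(s, l)`. -/
def Dser (P : Ctx) (m₁ m₂ l : ℕ) (s : ℂ) : ℂ :=
  ∑' n : ℕ, (if m₂ ∣ (m₁ * n + l) then P.r ((m₁ * n + l) / m₂) else 0) * P.r n *
    ((m₁ : ℂ) * (n : ℂ) + (l : ℂ) / 2) ^ (-s)

/-- The fourfold Selberg sum `S(z)` built from `K`. -/
def Ssum (P : Ctx) (α : ℕ → ℂ) (X : ℝ) (z : ℂ) : ℂ :=
  ∑ ν₁ ∈ Finset.Icc 1 ⌊X⌋₊, ∑ ν₂ ∈ Finset.Icc 1 ⌊X⌋₊,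
    ∑ ν₃ ∈ Finset.Icc 1 ⌊X⌋₊, ∑ ν₄ ∈ Finset.Icc 1 ⌊X⌋₊,
      betaf α X ν₁ * betaf α X ν₂ * betaf α X ν₃ * betaf α X ν₄ / ((ν₂ : ℂ) * (ν₄ : ℂ)) *
      (((Nat.gcd (ν₁ * ν₄) (ν₂ * ν₃) : ℕ) : ℂ) / ((ν₁ : ℂ) * (ν₃ : ℂ))) ^ ((1 : ℂ) - z) *
      P.Kf ((ν₁ * ν₄) / Nat.gcd (ν₁ * ν₄) (ν₂ * ν₃)) (1 - z) *
      P.Kf ((ν₂ * ν₃) / Nat.gcd (ν₁ * ν₄) (ν₂ * ν₃)) (1 - z)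

/-- The fourfold Selberg sum `S_{l,l}(z)` built from `K_{l,l}`. -/
def Sll (P : Ctx) (α : ℕ → ℂ) (l : Fin 2) (X : ℝ) (z : ℂ) : ℂ :=
  ∑ ν₁ ∈ Finset.Icc 1 ⌊X⌋₊, ∑ ν₂ ∈ Finset.Icc 1 ⌊X⌋₊,
    ∑ ν₃ ∈ Finset.Icc 1 ⌊X⌋₊, ∑ ν₄ ∈ Finset.Icc 1 ⌊X⌋₊,
      betaf α X ν₁ * betaf α X ν₂ * betaf α X ν₃ * betaf α X ν₄ / ((ν₂ : ℂ) * (ν₄ : ℂ)) *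
      (((Nat.gcd (ν₁ * ν₄) (ν₂ * ν₃) : ℕ) : ℂ) / ((ν₁ : ℂ) * (ν₃ : ℂ))) ^ ((1 : ℂ) - z) *
      P.Kl l ((ν₁ * ν₄) / Nat.gcd (ν₁ * ν₄) (ν₂ * ν₃)) z *
      P.Kl l ((ν₂ * ν₃) / Nat.gcd (ν₁ * ν₄) (ν₂ * ν₃)) z

/-- The sum `S_z(X₁, γ, N)` built from `K`. -/
def SzK (P : Ctx) (α : ℕ → ℂ) (X₁ : ℝ) (γ z : ℂ) (N : ℕ) : ℂ :=
  ∑ ν ∈ (Finset.Icc 1 ⌊X₁⌋₊).filter (fun ν => Nat.Coprime ν N),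
    α ν * P.Kf ν (1 - z) * (ν : ℂ) ^ (γ - 1) * ((Real.log (X₁ / (ν : ℝ)) : ℝ) : ℂ)

/-- The sum `S_z^{(l,l)}(X₁, γ, N)` built from `K_{l,l}`. -/
def SzKll (P : Ctx) (α : ℕ → ℂ) (l : Fin 2) (X₁ : ℝ) (γ z : ℂ) (N : ℕ) : ℂ :=
  ∑ ν ∈ (Finset.Icc 1 ⌊X₁⌋₊).filter (fun ν => Nat.Coprime ν N),
    α ν * P.Kl l ν z * (ν : ℂ) ^ (γ - 1) * ((Real.log (X₁ / (ν : ℝ)) : ℝ) : ℂ)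

/-- The number of units in the ring of integers of `ℚ(√-D)`. -/
def unitsD (P : Ctx) : ℝ := if P.D = 3 then 6 else if P.D = 4 then 4 else 2

/-- `h` is the class number of `ℚ(√-D)`, characterized by Dirichlet's class number formula
`L(1, χ_D) = 2 π h / (w √D)`. -/
def IsClassNumber (P : Ctx) [NeZero (P.d₁ * P.d₂)] (h : ℕ) : Prop :=
  DirichletCharacter.LFunction P.chiDchar 1 =
    (((2 * Real.pi * (h : ℝ) / (P.unitsD * Real.sqrt (P.D : ℝ)) : ℝ)) : ℂ)

end Ctx

/-!
Write `a = χ_{d₁}(p)`, `b = χ_{d₂}(p)`; then `α(p) = -(a + b)/2` and `α(p²) = -(a - b)²/8`.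
If `p ∣ D`, one of `a, b` vanishes, so `|α(p)| ≤ 1/2` and `|α(p²)| ≤ 1/8`, while `K_{1,1}(p^k, z)`
is a product of character values and `(p^k)^{-z}`, hence of modulus at most `1`.
If `p ∤ D`, then `a, b = ±1`. For `a = b` only the `p`-term survives and
`|K_{1,1}(p, z)| ≤ 2p/(p + 1)`; for `a = -b` only the `p²`-term survives and, with `w = p^{-z}`,
`K_{1,1}(p², z) = p/(p - 1) · (1 - w + w² - w/p)`. For `p ≥ 3` the triangle inequality suffices;
for `p = 2` and `z = it`, `|w| = 1` gives `1 - w + w² - w/2 = w (2 Re w - 3/2)` with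
`Re w = cos (t log 2) ≥ 0`. The case `l = 2` is the case `l = 1` for the swapped characters.
-/

lemma gchoose_half_zero : gchoose (1 / 2) 0 = 1 := by simp [gchoose]

lemma gchoose_half_one : gchoose (1 / 2) 1 = 1 / 2 := by simp [gchoose]

lemma gchoose_half_two : gchoose (1 / 2) 2 = -1 / 8 := by
  simp [gchoose, Finset.prod_range_succ]
  norm_num

lemma corad_prime_pow {p k : ℕ} (hp : p.Prime) (hk : k ≠ 0) (d : ℕ) :
    corad (p ^ k) d = if p ∣ d then p ^ k else 1 := by
  rw [corad, Nat.primeFactors_pow p hk, hp.primeFactors, Finset.filter_singleton]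
  split_ifs
  · rw [Finset.prod_singleton, hp.factorization_pow, Finsupp.single_eq_same]
  · rfl

lemma corad_ne_zero (m d : ℕ) : corad m d ≠ 0 :=
  Finset.prod_ne_zero_iff.mpr fun _ hq =>
    pow_ne_zero _ (Nat.pos_of_mem_primeFactors (Finset.mem_filter.mp hq).1).ne'

lemma eq_one_or_eq_neg_one_of_star_eq_self_of_norm_eq_one {x : ℂ} (hx : star x = x)
    (h : ‖x‖ = 1) : x = 1 ∨ x = -1 := by
  rw [← Complex.conj_eq_iff_re.mp hx, Complex.norm_real, Real.norm_eq_abs] at h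
  rw [← Complex.conj_eq_iff_re.mp hx]
  rcases abs_eq (zero_le_one' ℝ) |>.mp h with h | h <;> simp [h]

lemma DirichletCharacter.eq_one_or_eq_neg_one_of_star_eq_self {d n : ℕ}
    (χ : DirichletCharacter ℂ d) (hχ : ∀ a, star (χ a) = χ a) (hn : n.Coprime d) :
    χ n = 1 ∨ χ n = -1 :=
  eq_one_or_eq_neg_one_of_star_eq_self_of_norm_eq_one (hχ _)
    (χ.unit_norm_eq_one ((ZMod.isUnit_iff_coprime n d).mpr hn).unit)

lemma norm_natCast_cpow_neg_le_one {n : ℕ} (hn : n ≠ 0) {z : ℂ} (hz : 0 ≤ z.re) :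
    ‖(n : ℂ) ^ (-z)‖ ≤ 1 := by
  rw [Complex.norm_natCast_cpow_of_pos (Nat.pos_of_ne_zero hn)]
  exact Real.rpow_le_one_of_one_le_of_nonpos (by exact_mod_cast Nat.one_le_iff_ne_zero.mpr hn)
    (by simpa using hz)

lemma natCast_cpow_neg_natCast_mul (x : ℂ) (j : ℕ) (z : ℂ) :
    x ^ (-(j : ℂ) * z) = (x ^ (-z)) ^ j := by
  rw [← Complex.cpow_nat_mul, neg_mul, mul_neg]

lemma norm_one_sub_add_sq_sub_half_le {w : ℂ} (hw : ‖w‖ = 1) (hre : 0 ≤ w.re) :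
    ‖1 - w + w ^ 2 - w / 2‖ ≤ 3 / 2 := by
  have hconj : w * (starRingEnd ℂ) w = 1 := by
    rw [Complex.mul_conj, Complex.normSq_eq_norm_sq, hw]; simp
  have hfactor : 1 - w + w ^ 2 - w / 2 = w * ((2 * w.re - 3 / 2 : ℝ) : ℂ) := by
    rw [← hconj]
    push_cast
    rw [Complex.re_eq_add_conj]
    ring
  have hre1 : w.re ≤ 1 := hw ▸ Complex.re_le_norm w
  rw [hfactor, norm_mul, hw, one_mul, Complex.norm_real, Real.norm_eq_abs, abs_le]
  constructor <;> linarith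

lemma re_two_cpow_neg_I_mul_nonneg {t : ℝ} (ht0 : 0 ≤ t) (ht1 : t ≤ 1) :
    0 ≤ ((2 : ℂ) ^ (-(Complex.I * t))).re := by
  have h : (2 : ℂ) ^ (-(Complex.I * t)) = Complex.exp ((-(t * Real.log 2) : ℝ) * Complex.I) := by
    rw [Complex.cpow_def_of_ne_zero two_ne_zero, ← Complex.ofReal_ofNat,
      ← Complex.ofReal_log zero_le_two]
    push_cast
    ring_nf
  rw [h, Complex.exp_ofReal_mul_I_re, Real.cos_neg]
  have hlog : Real.log 2 < 1 := by linarith [Real.log_two_lt_d9]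
  apply Real.cos_nonneg_of_mem_Icc
  constructor <;> nlinarith [Real.pi_gt_three, Real.log_nonneg one_le_two]

lemma norm_one_sub_add_sq_sub_div_le {w : ℂ} (hw : ‖w‖ ≤ 1) {n : ℕ} (hn : n ≠ 0) :
    ‖1 - w + w ^ 2 - w / n‖ ≤ 3 + 1 / n := by
  have hdiv : ‖w / n‖ ≤ 1 / n := by
    rw [norm_div, Complex.norm_natCast]
    gcongr
  have hsq : ‖w ^ 2‖ ≤ 1 := by rw [norm_pow]; exact pow_le_one₀ (norm_nonneg w) hw
  calc ‖1 - w + w ^ 2 - w / n‖ ≤ ‖1 - w + w ^ 2‖ + ‖w / n‖ := norm_sub_le _ _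
    _ ≤ ‖1 - w‖ + ‖w ^ 2‖ + ‖w / n‖ := by gcongr; exact norm_add_le _ _
    _ ≤ ‖(1 : ℂ)‖ + ‖w‖ + ‖w ^ 2‖ + ‖w / n‖ := by gcongr; exact norm_sub_le _ _
    _ ≤ 3 + 1 / n := by rw [norm_one]; linarith

lemma norm_one_add_div_inv {p : ℕ} (hp : 1 < p) {ε : ℂ} {s : ℝ} (hε : ε = s) (hs : |s| = 1) :
    ‖(1 + ε / p)⁻¹‖ = p / (p + s) := by
  have hp' : (1 : ℝ) < p := by exact_mod_cast hp
  have hs' : -1 ≤ s := by linarith [neg_abs_le s]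
  have hpos : 0 < 1 + s / p := by
    rw [← div_self (by positivity : (p : ℝ) ≠ 0), ← add_div]
    exact div_pos (by linarith) (by linarith)
  rw [hε, show (1 : ℂ) + s / p = ((1 + s / p : ℝ) : ℂ) by push_cast; ring, norm_inv,
    Complex.norm_real, Real.norm_eq_abs, abs_of_pos hpos]
  field_simp

namespace Ctx

variable (P : Ctx) {α : ℕ → ℂ} {p : ℕ}

lemma swap_D : P.swap.D = P.D := Nat.mul_comm _ _

variable {P} in
lemma IsAlpha.swap (hα : P.IsAlpha α) : P.swap.IsAlpha α := by
  refine ⟨hα.1, hα.2.1, fun p hp k => ?_⟩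
  rw [hα.2.2 p hp k, ← Finset.Nat.sum_antidiagonal_swap]
  exact Finset.sum_congr rfl fun _ _ => mul_comm _ _

variable {P} in
lemma IsAlpha.apply_prime (hα : P.IsAlpha α) (hp : p.Prime) :
    α p = -(P.χ₁ p + P.χ₂ p) / 2 := by
  have h := hα.2.2 p hp 1
  rw [pow_one] at h
  rw [h, show Finset.HasAntidiagonal.antidiagonal 1 = {(0, 1), (1, 0)} from rfl,
    Finset.sum_pair (by decide), gchoose_half_zero, gchoose_half_one]
  ring

variable {P} in
lemma IsAlpha.apply_prime_sq (hα : P.IsAlpha α) (hp : p.Prime) :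
    α (p ^ 2) = -(P.χ₁ p - P.χ₂ p) ^ 2 / 8 := by
  rw [hα.2.2 p hp 2, show Finset.HasAntidiagonal.antidiagonal 2 = {(0, 2), (1, 1), (2, 0)} from rfl,
    Finset.sum_insert (by decide), Finset.sum_pair (by decide), gchoose_half_zero,
    gchoose_half_one, gchoose_half_two]
  ring

lemma KllS_prime_pow_of_not_dvd {k : ℕ} (hp : p.Prime) (hD : ¬ p ∣ P.D) (hk : k ≠ 0) (z : ℂ) :
    P.KllS (p ^ k) z = (1 + P.chiD p / p)⁻¹ * P.χ₁ p ^ k *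
      (∑ j ∈ Finset.range (k + 1), (P.chiD p * (p : ℂ) ^ (-z)) ^ j -
        (p : ℂ) ^ (-z) / p * ∑ j ∈ Finset.range (k - 1), (P.chiD p * (p : ℂ) ^ (-z)) ^ j) := by
  have h₁ : ¬ p ∣ P.d₁ := fun h => hD (h.mul_right _)
  have h₂ : ¬ p ∣ P.d₂ := fun h => hD (h.mul_left _)
  have hchiD : ∀ j, P.chiD (p ^ j) = P.chiD p ^ j := fun j => by
    simp [chiD, mul_pow]
  have hshift : (p : ℂ) ^ (-(z + 1)) = (p : ℂ) ^ (-z) / p := by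
    rw [neg_add, Complex.cpow_add _ _ (by exact_mod_cast hp.ne_zero), Complex.cpow_neg_one,
      div_eq_mul_inv]
  rw [KllS, corad_prime_pow hp hk, corad_prime_pow hp hk, if_neg h₁, if_neg h₂,
    Nat.primeFactors_pow p hk, hp.primeFactors, Finset.filter_singleton, if_pos hD,
    Finset.prod_singleton, hp.factorization_pow, Finsupp.single_eq_same]
  simp only [Nat.cast_one, Complex.one_cpow, map_one, one_mul, hchiD, hshift,
    natCast_cpow_neg_natCast_mul, mul_pow]

lemma norm_KllS_le_one {m : ℕ} (hm : ∀ q ∈ m.primeFactors, q ∣ P.D) {z : ℂ} (hz : 0 ≤ z.re) :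
    ‖P.KllS m z‖ ≤ 1 := by
  have hempty : m.primeFactors.filter (fun p => ¬ p ∣ P.D) = ∅ :=
    Finset.filter_eq_empty_iff.mpr fun q hq => not_not.mpr (hm q hq)
  rw [KllS, hempty, Finset.prod_empty, mul_one, norm_mul, norm_mul]
  have h₀ := norm_natCast_cpow_neg_le_one (corad_ne_zero m P.d₁) hz
  have h₁ := P.χ₁.norm_le_one (corad m P.d₂)
  have h₂ := P.χ₂.norm_le_one (corad m P.d₁)
  calc _ ≤ (1 : ℝ) * 1 * 1 := by gcongr
    _ = 1 := by norm_num

lemma norm_alpha_le_of_dvd (hα : P.IsAlpha α) (hp : p.Prime) (hD : p ∣ P.D) :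
    ‖α p‖ ≤ 1 / 2 ∧ ‖α (p ^ 2)‖ ≤ 1 / 8 := by
  have hzero : P.χ₁ p = 0 ∨ P.χ₂ p = 0 := by
    refine (hp.dvd_mul.mp hD).imp (fun h => ?_) (fun h => ?_) <;>
      exact MulChar.map_nonunit _ fun hu =>
        hp.coprime_iff_not_dvd.mp ((ZMod.isUnit_iff_coprime _ _).mp hu) h
  have h₁ := P.χ₁.norm_le_one p
  have h₂ := P.χ₂.norm_le_one p
  rw [hα.apply_prime hp, hα.apply_prime_sq hp]
  rcases hzero with h | h <;> rw [h] <;> simp only [zero_add, add_zero, zero_sub, sub_zero,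
    neg_sq, norm_div, norm_neg, norm_pow, RCLike.norm_ofNat] <;>
    constructor <;> nlinarith [norm_nonneg (P.χ₁ p), norm_nonneg (P.χ₂ p)]

lemma alpha_KllS_prime_sum_le_of_dvd (hα : P.IsAlpha α) (hp : p.Prime) (hD : p ∣ P.D) {z : ℂ}
    (hz : 0 ≤ z.re) :
    ‖α p * P.KllS p z‖ / p + ‖α (p ^ 2) * P.KllS (p ^ 2) z‖ / (p : ℝ) ^ 2 ≤
      1 / 2 / p + 1 / 8 / (p : ℝ) ^ 2 := by
  obtain ⟨hα₁, hα₂⟩ := P.norm_alpha_le_of_dvd hα hp hD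
  have hK₁ : ‖P.KllS p z‖ ≤ 1 :=
    P.norm_KllS_le_one (by simpa [hp.primeFactors] using hD) hz
  have hK₂ : ‖P.KllS (p ^ 2) z‖ ≤ 1 :=
    P.norm_KllS_le_one (by simpa [Nat.primeFactors_pow, hp.primeFactors] using hD) hz
  rw [norm_mul, norm_mul]
  gcongr
  · calc ‖α p‖ * ‖P.KllS p z‖ ≤ 1 / 2 * 1 := by gcongr
      _ = 1 / 2 := mul_one _
  · calc ‖α (p ^ 2)‖ * ‖P.KllS (p ^ 2) z‖ ≤ 1 / 8 * 1 := by gcongr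
      _ = 1 / 8 := mul_one _

lemma alpha_KllS_prime_sum_le_of_not_dvd (hr₁ : ∀ a, star (P.χ₁ a) = P.χ₁ a)
    (hr₂ : ∀ a, star (P.χ₂ a) = P.χ₂ a) (hα : P.IsAlpha α) (hp : p.Prime) (hD : ¬ p ∣ P.D)
    {z : ℂ} (hz : 0 ≤ z.re) {B : ℝ}
    (hB : ‖1 - (p : ℂ) ^ (-z) + ((p : ℂ) ^ (-z)) ^ 2 - (p : ℂ) ^ (-z) / p‖ ≤ B) :
    ‖α p * P.KllS p z‖ / p + ‖α (p ^ 2) * P.KllS (p ^ 2) z‖ / (p : ℝ) ^ 2 ≤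
      max (2 / (p + 1) : ℝ) (B / (2 * p * (p - 1))) := by
  set a := P.χ₁ p
  set w := (p : ℂ) ^ (-z)
  have hchiD : P.chiD p = a * P.χ₂ p := rfl
  have ha : a = 1 ∨ a = -1 :=
    DirichletCharacter.eq_one_or_eq_neg_one_of_star_eq_self P.χ₁ hr₁
      (hp.coprime_iff_not_dvd.mpr fun h => hD (h.mul_right _))
  have hb : P.χ₂ p = 1 ∨ P.χ₂ p = -1 :=
    DirichletCharacter.eq_one_or_eq_neg_one_of_star_eq_self P.χ₂ hr₂
      (hp.coprime_iff_not_dvd.mpr fun h => hD (h.mul_left _))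
  have ha2 : a ^ 2 = 1 := by rcases ha with h | h <;> rw [h] <;> norm_num
  have hnorma : ‖a‖ = 1 := by rcases ha with h | h <;> rw [h] <;> simp
  have hb' : P.χ₂ p = a ∨ P.χ₂ p = -a := by
    rcases ha with h | h <;> rcases hb with h' | h' <;> simp [h, h']
  have hp1 : (1 : ℝ) < p := by exact_mod_cast hp.one_lt
  rcases hb' with hb' | hb'
  · have hα₂ : α (p ^ 2) = 0 := by rw [hα.apply_prime_sq hp, hb', sub_self]; ring
    have hα₁ : ‖α p‖ = 1 := by
      rw [hα.apply_prime hp, hb', show -(a + a) / 2 = -a by ring, norm_neg, hnorma]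
    have hε : P.chiD p = ((1 : ℝ) : ℂ) := by rw [hchiD, hb', ← sq, ha2, Complex.ofReal_one]
    have hK : P.KllS p z = (1 + P.chiD p / p)⁻¹ * a * (1 + w) := by
      have := P.KllS_prime_pow_of_not_dvd hp hD one_ne_zero z
      rw [pow_one] at this
      rw [this, hε]
      simp only [Finset.sum_range_succ, Finset.sum_range_one, Finset.sum_range_zero,
        Nat.sub_self, w, a]
      push_cast
      ring
    have hw : ‖1 + w‖ ≤ 2 := by
      linarith [norm_add_le 1 w, norm_natCast_cpow_neg_le_one hp.ne_zero hz, norm_one (α := ℂ)]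
    rw [hα₂, zero_mul, norm_zero, zero_div, add_zero, norm_mul, hα₁, one_mul, hK, norm_mul,
      norm_mul, norm_one_add_div_inv hp.one_lt hε (by simp), hnorma, mul_one]
    refine le_max_of_le_left ?_
    calc ↑p / (↑p + 1) * ‖1 + w‖ / ↑p ≤ ↑p / (↑p + 1) * 2 / ↑p := by gcongr
      _ = 2 / (p + 1) := by field_simp
  · have hα₁ : α p = 0 := by rw [hα.apply_prime hp, hb', add_neg_cancel]; ring
    have hα₂ : ‖α (p ^ 2)‖ = 1 / 2 := by
      rw [hα.apply_prime_sq hp, hb', show -(a - -a) ^ 2 / 8 = -(a ^ 2) / 2 by ring, ha2]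
      norm_num
    have hε : P.chiD p = ((-1 : ℝ) : ℂ) := by
      rw [hchiD, hb', mul_neg, ← sq, ha2, Complex.ofReal_neg, Complex.ofReal_one]
    have hK : P.KllS (p ^ 2) z = (1 + P.chiD p / p)⁻¹ * a ^ 2 * (1 - w + w ^ 2 - w / p) := by
      rw [P.KllS_prime_pow_of_not_dvd hp hD two_ne_zero z, hε]
      simp only [Finset.sum_range_succ, Finset.sum_range_zero, w]
      push_cast
      ring
    rw [hα₁, zero_mul, norm_zero, zero_div, zero_add, norm_mul, hα₂, hK, norm_mul, norm_mul,
      norm_one_add_div_inv hp.one_lt hε (by simp), norm_pow, hnorma, one_pow, mul_one,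
      ← sub_eq_add_neg]
    refine le_max_of_le_right ?_
    have hp1' : (p : ℝ) - 1 ≠ 0 := by linarith
    calc 1 / 2 * (↑p / (↑p - 1) * ‖1 - w + w ^ 2 - w / ↑p‖) / (p : ℝ) ^ 2
        ≤ 1 / 2 * (↑p / (↑p - 1) * B) / (p : ℝ) ^ 2 := by gcongr
      _ = B / (2 * p * (p - 1)) := by field_simp

lemma alpha_KllS_prime_sum_bounds (hr₁ : ∀ a, star (P.χ₁ a) = P.χ₁ a)
    (hr₂ : ∀ a, star (P.χ₂ a) = P.χ₂ a) (hα : P.IsAlpha α) :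
    (∀ t : ℝ, 0 ≤ t → t ≤ 1 →
      (¬ 2 ∣ P.D →
        ‖α 2 * P.KllS 2 (Complex.I * (t : ℂ))‖ / 2 +
          ‖α 4 * P.KllS 4 (Complex.I * (t : ℂ))‖ / 4 ≤ 2 / 3) ∧
      (2 ∣ P.D →
        ‖α 2 * P.KllS 2 (Complex.I * (t : ℂ))‖ / 2 +
          ‖α 4 * P.KllS 4 (Complex.I * (t : ℂ))‖ / 4 ≤ 1 / 3)) ∧
    (∀ p : ℕ, p.Prime → 3 ≤ p → ∀ z : ℂ, 0 ≤ z.re →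
      (¬ p ∣ P.D →
        ‖α p * P.KllS p z‖ / (p : ℝ) +
          ‖α (p ^ 2) * P.KllS (p ^ 2) z‖ / (p : ℝ) ^ 2 ≤ 5 / 9) ∧
      (p ∣ P.D →
        ‖α p * P.KllS p z‖ / (p : ℝ) +
          ‖α (p ^ 2) * P.KllS (p ^ 2) z‖ / (p : ℝ) ^ 2 ≤ 1 / 5)) := by
  refine ⟨fun t ht0 ht1 => ⟨fun hD => ?_, fun hD => ?_⟩,
    fun p hp hp3 z hz => ⟨fun hD => ?_, fun hD => ?_⟩⟩
  · have hz : 0 ≤ (Complex.I * t).re := by simp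
    have hw : ‖(2 : ℂ) ^ (-(Complex.I * t))‖ = 1 := by
      simpa using Complex.norm_natCast_cpow_of_pos two_pos (-(Complex.I * t))
    have h := P.alpha_KllS_prime_sum_le_of_not_dvd hr₁ hr₂ hα Nat.prime_two hD hz (B := 3 / 2)
      (by simpa using norm_one_sub_add_sq_sub_half_le hw (re_two_cpow_neg_I_mul_nonneg ht0 ht1))
    norm_num at h ⊢
    linarith
  · have h := P.alpha_KllS_prime_sum_le_of_dvd hα Nat.prime_two hD (z := Complex.I * t) (by simp)
    norm_num at h ⊢
    linarith
  · have hp3' : (3 : ℝ) ≤ p := by exact_mod_cast hp3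
    refine (P.alpha_KllS_prime_sum_le_of_not_dvd hr₁ hr₂ hα hp hD hz (norm_one_sub_add_sq_sub_div_le
      (norm_natCast_cpow_neg_le_one hp.ne_zero hz) hp.ne_zero)).trans (max_le ?_ ?_)
    · rw [div_le_iff₀ (by positivity)]; linarith
    · rw [div_le_iff₀ (by nlinarith)]
      have : 1 / (p : ℝ) ≤ 1 / 3 := by gcongr
      nlinarith
  · have hp3' : (3 : ℝ) ≤ p := by exact_mod_cast hp3
    refine (P.alpha_KllS_prime_sum_le_of_dvd hα hp hD hz).trans ?_
    have h₁ : 1 / 2 / (p : ℝ) ≤ 1 / 2 / 3 := by gcongr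
    have h₂ : 1 / 8 / (p : ℝ) ^ 2 ≤ 1 / 8 / 3 ^ 2 := by gcongr
    linarith

end Ctx

theorem statement_10 (P : Ctx) (hP : P.Good) (α : ℕ → ℂ) (hα : P.IsAlpha α) :
    (∀ l : Fin 2, ∀ t : ℝ, 0 ≤ t → t ≤ 1 →
      (¬ 2 ∣ P.D →
        ‖α 2 * P.Kl l 2 (Complex.I * (t : ℂ))‖ / 2 +
          ‖α 4 * P.Kl l 4 (Complex.I * (t : ℂ))‖ / 4 ≤ 2 / 3) ∧
      (2 ∣ P.D →
        ‖α 2 * P.Kl l 2 (Complex.I * (t : ℂ))‖ / 2 +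
          ‖α 4 * P.Kl l 4 (Complex.I * (t : ℂ))‖ / 4 ≤ 1 / 3)) ∧
    (∀ l : Fin 2, ∀ p : ℕ, p.Prime → 3 ≤ p → ∀ z : ℂ, 0 ≤ z.re →
      (¬ p ∣ P.D →
        ‖α p * P.Kl l p z‖ / (p : ℝ) +
          ‖α (p ^ 2) * P.Kl l (p ^ 2) z‖ / (p : ℝ) ^ 2 ≤ 5 / 9) ∧
      (p ∣ P.D →
        ‖α p * P.Kl l p z‖ / (p : ℝ) +
          ‖α (p ^ 2) * P.Kl l (p ^ 2) z‖ / (p : ℝ) ^ 2 ≤ 1 / 5)) := by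
  obtain ⟨-, -, -, -, -, -, hr₁, hr₂⟩ := hP
  obtain ⟨h₁_two, h₁_odd⟩ := P.alpha_KllS_prime_sum_bounds hr₁ hr₂ hα
  obtain ⟨h₂_two, h₂_odd⟩ := P.swap.alpha_KllS_prime_sum_bounds hr₂ hr₁ hα.swap
  rw [P.swap_D] at h₂_two h₂_odd
  refine ⟨fun l => ?_, fun l => ?_⟩ <;> fin_cases l
  exacts [h₁_two, h₂_two, h₁_odd, h₂_odd]

end EpsteinPaper
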